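/- arXiv:2410.22512 — 4 statements merged into one kernel-verified Lean document; each statement's English description precedes it below -/
import Mathlib

section
/- Let R = k[[x,y]] be the power series ring over a field k. The subring R[x/y^n : n ∈ ℤ_{>0}] of the quotient field of R, generated over R by all elements x/y^n for positive integers n, is not a Noetherian ring. -/
/-!
Every element of `A = R[x/y^n]` has the form `(r y^M + g x) / y^M`, so `y⁻¹ ∉ A` as soon as
`y^M ∉ (y^(M+1), x)` for all `M`, which holds in `k[[x,y]]`. On the other hand
`x = y^n · (x/y^n)` lies in `⋂ₙ (y A)^n`; if `A` were Noetherian, Krull's intersection theorem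
for the domain `A` would force `y` to be a unit of `A`.
-/

open MvPowerSeries

theorem MvPowerSeries.X_pow_notMem_span_X_pow_succ_X {σ R : Type*} [CommSemiring R]
    [Nontrivial R] {i j : σ} (hij : i ≠ j) (M : ℕ) :
    (X i : MvPowerSeries σ R) ^ M ∉ Ideal.span {X i ^ (M + 1), X j} := by
  classical
  rw [Ideal.mem_span_pair]
  rintro ⟨r, g, h⟩
  have hcoeff := congrArg (coeff (Finsupp.single i M)) h
  rw [map_add, X_pow_eq, coeff_mul_monomial, if_neg (by simp), X, coeff_mul_monomial,
    if_neg (by simp [Finsupp.single_le_iff, hij.symm]), coeff_X_pow] at hcoeff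
  simp at hcoeff

section

variable {R K : Type*} [CommRing R] [Field K] [Algebra R K]

theorem exists_mul_pow_eq_of_mem_adjoin_div_pow {x y : R} (hy : algebraMap R K y ≠ 0) {z : K}
    (hz : z ∈ Algebra.adjoin R
      {w : K | ∃ n : ℕ, 0 < n ∧ w = algebraMap R K x / algebraMap R K y ^ n}) :
    ∃ (M : ℕ) (r g : R), z * algebraMap R K y ^ M = algebraMap R K (r * y ^ M + g * x) := by
  induction hz using Algebra.adjoin_induction with
  | mem w hw =>
    obtain ⟨n, -, rfl⟩ := hw
    exact ⟨n, 0, 1, by simp [div_mul_cancel₀ _ (pow_ne_zero n hy)]⟩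
  | algebraMap r => exact ⟨0, r, 0, by simp⟩
  | add z₁ z₂ _ _ ih₁ ih₂ =>
    obtain ⟨M₁, r₁, g₁, h₁⟩ := ih₁
    obtain ⟨M₂, r₂, g₂, h₂⟩ := ih₂
    refine ⟨M₁ + M₂, r₁ + r₂, g₁ * y ^ M₂ + g₂ * y ^ M₁, ?_⟩
    calc (z₁ + z₂) * algebraMap R K y ^ (M₁ + M₂)
        = z₁ * algebraMap R K y ^ M₁ * algebraMap R K y ^ M₂
          + z₂ * algebraMap R K y ^ M₂ * algebraMap R K y ^ M₁ := by ring
      _ = _ := by rw [h₁, h₂]; simp only [map_add, map_mul, map_pow]; ring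
  | mul z₁ z₂ _ _ ih₁ ih₂ =>
    obtain ⟨M₁, r₁, g₁, h₁⟩ := ih₁
    obtain ⟨M₂, r₂, g₂, h₂⟩ := ih₂
    refine ⟨M₁ + M₂, r₁ * r₂, r₁ * y ^ M₁ * g₂ + r₂ * y ^ M₂ * g₁ + g₁ * g₂ * x, ?_⟩
    calc z₁ * z₂ * algebraMap R K y ^ (M₁ + M₂)
        = z₁ * algebraMap R K y ^ M₁ * (z₂ * algebraMap R K y ^ M₂) := by ring
      _ = _ := by rw [h₁, h₂, ← map_mul]; congr 1; ring

theorem inv_notMem_adjoin_div_pow (hinj : Function.Injective (algebraMap R K)) {x y : R}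
    (hy : algebraMap R K y ≠ 0) (h : ∀ M : ℕ, y ^ M ∉ Ideal.span {y ^ (M + 1), x}) :
    (algebraMap R K y)⁻¹ ∉ Algebra.adjoin R
      {w : K | ∃ n : ℕ, 0 < n ∧ w = algebraMap R K x / algebraMap R K y ^ n} := by
  intro hmem
  obtain ⟨M, r, g, hrg⟩ := exists_mul_pow_eq_of_mem_adjoin_div_pow hy hmem
  refine h M (Ideal.mem_span_pair.mpr ⟨r, g * y, hinj ?_⟩)
  calc algebraMap R K (r * y ^ (M + 1) + g * y * x)
      = algebraMap R K (r * y ^ M + g * x) * algebraMap R K y := by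
        simp only [map_add, map_mul, map_pow]; ring
    _ = algebraMap R K (y ^ M) := by
        rw [← hrg, map_pow, mul_right_comm, inv_mul_cancel₀ hy, one_mul]

theorem not_isNoetherianRing_adjoin_div_pow (hinj : Function.Injective (algebraMap R K))
    {x y : R} (hx : x ≠ 0) (h : ∀ M : ℕ, y ^ M ∉ Ideal.span {y ^ (M + 1), x}) :
    ¬ IsNoetherianRing (Algebra.adjoin R
      {w : K | ∃ n : ℕ, 0 < n ∧ w = algebraMap R K x / algebraMap R K y ^ n}) := by
  set A := Algebra.adjoin R
    {w : K | ∃ n : ℕ, 0 < n ∧ w = algebraMap R K x / algebraMap R K y ^ n}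
  intro hA
  have hy : y ≠ 0 := fun hy0 => h 1 (by simp [hy0])
  have hy' : algebraMap R K y ≠ 0 := (map_ne_zero_iff _ hinj).mpr hy
  have hx_mem : algebraMap R A x ∈ ⨅ n : ℕ, Ideal.span {algebraMap R A y} ^ n := by
    refine Ideal.mem_iInf.mpr fun n => ?_
    rcases n.eq_zero_or_pos with rfl | hn
    · simp
    rw [Ideal.span_singleton_pow, Ideal.mem_span_singleton']
    refine ⟨⟨_, Algebra.subset_adjoin ⟨n, hn, rfl⟩⟩, Subtype.ext ?_⟩
    simp [div_mul_cancel₀ _ (pow_ne_zero n hy')]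
  have hunit : IsUnit (algebraMap R A y) := by
    by_contra hnu
    rw [Ideal.iInf_pow_eq_bot_of_isDomain _
      (Ideal.span_singleton_eq_top.not.mpr hnu), Ideal.mem_bot] at hx_mem
    exact hx (hinj (by simpa using congrArg Subtype.val hx_mem))
  obtain ⟨b, hb⟩ := hunit.exists_left_inv
  refine inv_notMem_adjoin_div_pow hinj hy' h ?_
  have hb' : (b : K) * algebraMap R K y = 1 := congrArg Subtype.val hb
  rw [← eq_inv_of_mul_eq_one_left hb']
  exact b.2

end

/-- Let `R = k[[x,y]]` be the power series ring in two variables over a field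
`k`, with quotient field `K`. The `R`-subalgebra `R[x/y^n : n ∈ ℤ_{>0}]` of `K` generated by all
elements `x/y^n` for positive integers `n` is not Noetherian. -/
theorem adjoin_x_div_y_pow_not_noetherian (k : Type*) [Field k] :
    letI R := MvPowerSeries (Fin 2) k
    letI K := FractionRing R
    letI x : K := algebraMap R K (MvPowerSeries.X (0 : Fin 2))
    letI y : K := algebraMap R K (MvPowerSeries.X (1 : Fin 2))
    ¬ IsNoetherianRing
      (Algebra.adjoin R {z : K | ∃ n : ℕ, 0 < n ∧ z = x / y ^ n}) :=
  not_isNoetherianRing_adjoin_div_pow (IsFractionRing.injective _ _)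
    (fun h0 => by simpa using congrArg (coeff (Finsupp.single 0 1)) h0)
    (X_pow_notMem_span_X_pow_succ_X (by decide))
end

section
/- Let A be an integral domain contained in a field L, and let P be a prime ideal of A. Then there exists a valuation ring O of L (with maximal ideal m) such that A ⊆ O and m ∩ A = P. -/
/-- Zariski–Samuel, Theorem VI.4.5. Let `A` be an integral domain contained in
a field `L` (via an injective ring homomorphism `f`), and let `P` be a prime ideal of `A`. Then
there exists a valuation ring `O` of `L` such that `A ⊆ O` and `m_O ∩ A = P`, i.e. `f a` is a
nonunit of `O` exactly when `a ∈ P`. -/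
theorem exists_valuationSubring_center
    (A L : Type*) [CommRing A] [IsDomain A] [Field L]
    (f : A →+* L) (hf : Function.Injective f)
    (P : Ideal A) [P.IsPrime] :
    ∃ O : ValuationSubring L,
      (∀ a : A, f a ∈ O) ∧
      (∀ a : A, f a ∈ O.nonunits ↔ a ∈ P) := by
  let A' : Subring L := f.range
  let e : A ≃+* A' := RingEquiv.ofBijective f.rangeRestrict
    ⟨fun x y h => hf (congrArg Subtype.val h), f.rangeRestrict_surjective⟩
  let P' : Ideal A' := P.comap (e.symm : A' →+* A)
  haveI : P'.IsPrime := Ideal.IsPrime.comap _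
  obtain ⟨O, hO⟩ := (LocalSubring.ofPrime A' P').exists_le_valuationSubring
  have hle : A' ≤ O.toSubring := (LocalSubring.le_ofPrime A' P').trans hO.1
  refine ⟨O, fun a => hle ⟨a, rfl⟩, fun a => ?_⟩
  -- the element `f a` inside the localization subring
  set y : (LocalSubring.ofPrime A' P').toSubring :=
    algebraMap A' (LocalSubring.ofPrime A' P').toSubring (e a) with hy
  have hyval : (y : L) = f a := rfl
  have h1 : IsUnit y ↔ a ∉ P := by
    rw [IsLocalization.AtPrime.isUnit_to_map_iff
          (LocalSubring.ofPrime A' P').toSubring P' (e a)]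
    have : e a ∈ P'.primeCompl ↔ a ∉ P := by
      simp [Ideal.primeCompl, P', Ideal.mem_comap]
    exact this
  haveI := hO.2
  have h2 : IsUnit y ↔ IsUnit (Subring.inclusion hO.1 y) :=
    ⟨fun h => h.map _, fun h => isUnit_of_map_unit (Subring.inclusion hO.1) y h⟩
  have h3 : (Subring.inclusion hO.1 y : L) = f a := hyval
  rw [ValuationSubring.mem_nonunits_iff_exists_mem_maximalIdeal]
  constructor
  · rintro ⟨ha, hm⟩
    by_contra hp
    have hu : IsUnit ((⟨f a, ha⟩ : O)) := by
      have h := h2.mp (h1.mpr hp)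
      rwa [show Subring.inclusion hO.1 y = ⟨f a, ha⟩ from Subtype.ext h3] at h
    exact (IsLocalRing.mem_maximalIdeal _).mp hm hu
  · intro hp
    refine ⟨hle ⟨a, rfl⟩, ?_⟩
    rw [IsLocalRing.mem_maximalIdeal]
    intro hu
    exact (h1.mp (h2.mpr (by rwa [show (⟨f a, _⟩ : O) = Subring.inclusion hO.1 y from
      Subtype.ext h3.symm] at hu))) hp
end

section
/- Let R be a normal Noetherian domain, W → Spec(R) a birational projective morphism with W normal and integral, and D an effective Cartier divisor on W. Then the ideal J = Γ(W, O_W(−D)) ⊆ R is integrally closed in R. -/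
/-!
Stalkwise, `O_W(−D)` is a principal ideal `(g)` of the normal local ring `O_{W,x}`, and principal
ideals of integrally closed domains are integrally closed: if `a` is integral over `(g)` with
`g ≠ 0`, dividing its equation of integral dependence by `g ^ n` shows that `a / g` is integral
over `O_{W,x}`, hence lies in it. Integral dependence over `J` maps to integral dependence
over each stalk ideal, so `J`, the intersection of their preimages, is integrally closed.
-/

open AlgebraicGeometry CategoryTheory Polynomial Finset

def IsIntegralOverIdeal {R : Type*} [CommRing R] (J : Ideal R) (a : R) : Prop :=
  ∃ n : ℕ, 0 < n ∧ ∃ c : ℕ → R, (∀ i : ℕ, 1 ≤ i → i ≤ n → c i ∈ J ^ i) ∧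
    a ^ n + ∑ i ∈ Icc 1 n, c i * a ^ (n - i) = 0

namespace IsIntegralOverIdeal

variable {R S : Type*} [CommRing R] [CommRing S] {J J' : Ideal R} {a : R}

theorem map (f : R →+* S) (h : IsIntegralOverIdeal J a) : IsIntegralOverIdeal (J.map f) (f a) := by
  obtain ⟨n, hn, c, hc, hrel⟩ := h
  refine ⟨n, hn, f ∘ c, fun i h1 h2 => ?_, ?_⟩
  · rw [← Ideal.map_pow]
    exact Ideal.mem_map_of_mem f (hc i h1 h2)
  · simpa using congrArg f hrel

theorem mono (hJ : J ≤ J') (h : IsIntegralOverIdeal J a) : IsIntegralOverIdeal J' a :=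
  let ⟨n, hn, c, hc, hrel⟩ := h
  ⟨n, hn, c, fun i h1 h2 => Ideal.pow_right_mono hJ i (hc i h1 h2), hrel⟩

end IsIntegralOverIdeal

theorem isIntegral_of_pow_add_sum_eq_zero {A K : Type*} [CommRing A] [CommRing K] [Algebra A K]
    {n : ℕ} (hn : 0 < n) {t : K} (d : ℕ → A)
    (h : t ^ n + ∑ i ∈ Icc 1 n, algebraMap A K (d i) * t ^ (n - i) = 0) : IsIntegral A t := by
  refine ⟨X ^ n + ∑ i ∈ Icc 1 n, C (d i) * X ^ (n - i), ?_, ?_⟩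
  · obtain ⟨m, rfl⟩ := Nat.exists_eq_add_of_lt hn
    refine monic_X_pow_add <| (degree_sum_le _ _).trans_lt <|
      (Finset.sup_lt_iff (by simp)).mpr fun i hi => ?_
    obtain ⟨hi1, hi2⟩ := mem_Icc.mp hi
    exact (degree_C_mul_X_pow_le _ _).trans_lt (by exact_mod_cast Nat.sub_lt_of_pos_le hi1 hi2)
  · simpa only [eval₂_add, eval₂_pow, eval₂_X, eval₂_finsetSum, eval₂_mul, eval₂_C] using h

theorem pow_mul_pow_add_sum {S : Type*} [CommRing S] (g t : S) (e : ℕ → S) (n : ℕ) :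
    g ^ n * (t ^ n + ∑ i ∈ Icc 1 n, e i * t ^ (n - i)) =
      (g * t) ^ n + ∑ i ∈ Icc 1 n, g ^ i * e i * (g * t) ^ (n - i) := by
  rw [mul_add, mul_sum, mul_pow]
  congr 1
  refine sum_congr rfl fun i hi => ?_
  rw [← Nat.add_sub_cancel' (mem_Icc.mp hi).2, pow_add, Nat.add_sub_cancel_left, mul_pow]
  ring

theorem IsIntegralOverIdeal.mem_of_span_singleton {A : Type*} [CommRing A] [IsDomain A]
    [IsIntegrallyClosed A] {g a : A} (h : IsIntegralOverIdeal (Ideal.span {g}) a) :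
    a ∈ Ideal.span {g} := by
  obtain ⟨n, hn, c, hc, hrel⟩ := h
  have hdvd : ∀ i, 1 ≤ i → i ≤ n → g ^ i ∣ c i := fun i h1 h2 => by
    simpa [Ideal.span_singleton_pow, Ideal.mem_span_singleton] using hc i h1 h2
  rcases eq_or_ne g 0 with rfl | hg
  · rw [sum_eq_zero fun i hi => ?_, add_zero] at hrel
    · simp [pow_eq_zero_iff hn.ne' |>.mp hrel]
    obtain ⟨hi1, hi2⟩ := mem_Icc.mp hi
    have := hdvd i hi1 hi2
    rw [zero_pow (by omega), zero_dvd_iff] at this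
    rw [this, zero_mul]
  choose! d hd using hdvd
  set K := FractionRing A
  have hgK : algebraMap A K g ≠ 0 := (map_ne_zero_iff _ (IsFractionRing.injective A K)).mpr hg
  set t := algebraMap A K a / algebraMap A K g
  have hgt : algebraMap A K g * t = algebraMap A K a := mul_div_cancel₀ _ hgK
  have ht : t ^ n + ∑ i ∈ Icc 1 n, algebraMap A K (d i) * t ^ (n - i) = 0 := by
    refine (mul_eq_zero.mp ?_).resolve_left (pow_ne_zero n hgK)
    rw [pow_mul_pow_add_sum, hgt, ← map_zero (algebraMap A K), ← hrel]
    simp only [map_add, map_pow, map_sum, map_mul]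
    congr 1
    refine sum_congr rfl fun i hi => ?_
    rw [hd i (mem_Icc.mp hi).1 (mem_Icc.mp hi).2, map_mul, map_pow]
  obtain ⟨u, hu⟩ := IsIntegrallyClosed.isIntegral_iff.mp (isIntegral_of_pow_add_sum_eq_zero hn d ht)
  refine Ideal.mem_span_singleton'.mpr ⟨u, IsFractionRing.injective A K ?_⟩
  rw [map_mul, hu, mul_comm, hgt]

theorem global_sections_of_effective_cartier_ideal_sheaf_integrally_closed_general
    (R : Type) [CommRing R]
    (W : Scheme) [IsIntegral W]
    (π : W ⟶ Spec (CommRingCat.of R))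
    -- `W` is normal: all local rings are integrally closed domains
    (hnormal : ∀ x : W, IsIntegrallyClosed (W.presheaf.stalk x))
    -- the ideal sheaf `O_W(−D)` of an effective Cartier divisor `D`, given stalkwise
    (𝒟 : ∀ x : W, Ideal (W.presheaf.stalk x))
    -- `D` is effective Cartier: locally, `𝒟` is generated by one nonzero section
    (hCartier : ∀ x : W, ∃ (U : W.Opens) (hx : x ∈ U) (s : Γ(W, U)),
      (∀ (y : W) (hy : y ∈ U),
        𝒟 y = Ideal.span {W.presheaf.germ U y hy s}) ∧
      W.presheaf.germ U x hx s ≠ 0) :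
    ∀ J : Ideal R,
      (J : Set R) = {a : R |
        ∀ x : W, ((Scheme.ΓSpecIso (CommRingCat.of R)).inv ≫ π.appTop ≫
            W.presheaf.germ ⊤ x trivial) a ∈ 𝒟 x} →
      ∀ a : R,
        (∃ n : ℕ, 0 < n ∧ ∃ c : ℕ → R, (∀ i : ℕ, 1 ≤ i → i ≤ n → c i ∈ J ^ i) ∧
          a ^ n + ∑ i ∈ Finset.Icc 1 n, c i * a ^ (n - i) = 0) →
        a ∈ J := by
  intro J hJ a ha
  rw [← SetLike.mem_coe, hJ]
  intro x
  set φ := (Scheme.ΓSpecIso (CommRingCat.of R)).inv ≫ π.appTop ≫ W.presheaf.germ ⊤ x trivial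
  have hJx : J.map φ.hom ≤ 𝒟 x := Ideal.map_le_iff_le_comap.mpr fun r hr =>
    (Set.ext_iff.mp hJ r).mp hr x
  obtain ⟨U, hx, s, hDs, -⟩ := hCartier x
  rw [hDs x hx] at hJx ⊢
  have := hnormal x
  exact ((IsIntegralOverIdeal.map φ.hom ha).mono hJx).mem_of_span_singleton

/-- Let `R` be a Noetherian normal domain, `π : W → Spec R` a birational
projective (hence proper) morphism with `W` a normal integral scheme, and `D` an effective
Cartier divisor on `W`, encoded by its ideal sheaf: a family `𝒟 x ⊆ O_{W,x}` of stalkwise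
ideals which is locally generated by a single regular (nonzero) section. Then the ideal
`J = Γ(W, O_W(−D)) = {a ∈ R : a_x ∈ 𝒟 x for all x}` is an integrally closed ideal of `R`:
every element of `R` integral over `J` lies in `J`. -/
theorem global_sections_of_effective_cartier_ideal_sheaf_integrally_closed
    (R : Type) [CommRing R] [IsDomain R] [IsNoetherianRing R] [IsIntegrallyClosed R]
    (W : Scheme) [IsIntegral W]
    (π : W ⟶ Spec (CommRingCat.of R)) [IsProper π]
    -- `π` is birational: it induces an isomorphism at the generic point
    (hbir : Function.Bijective (π.stalkMap (genericPoint W)))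
    -- `W` is normal: all local rings are integrally closed domains
    (hnormal : ∀ x : W, IsIntegrallyClosed (W.presheaf.stalk x))
    -- the ideal sheaf `O_W(−D)` of an effective Cartier divisor `D`, given stalkwise
    (𝒟 : ∀ x : W, Ideal (W.presheaf.stalk x))
    -- `D` is effective Cartier: locally, `𝒟` is generated by one nonzero section
    (hCartier : ∀ x : W, ∃ (U : W.Opens) (hx : x ∈ U) (s : Γ(W, U)),
      (∀ (y : W) (hy : y ∈ U),
        𝒟 y = Ideal.span {W.presheaf.germ U y hy s}) ∧
      W.presheaf.germ U x hx s ≠ 0) :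
    ∀ J : Ideal R,
      (J : Set R) = {a : R |
        ∀ x : W, ((Scheme.ΓSpecIso (CommRingCat.of R)).inv ≫ π.appTop ≫
            W.presheaf.germ ⊤ x trivial) a ∈ 𝒟 x} →
      ∀ a : R,
        (∃ n : ℕ, 0 < n ∧ ∃ c : ℕ → R, (∀ i : ℕ, 1 ≤ i → i ≤ n → c i ∈ J ^ i) ∧
          a ^ n + ∑ i ∈ Finset.Icc 1 n, c i * a ^ (n - i) = 0) →
        a ∈ J :=
  global_sections_of_effective_cartier_ideal_sheaf_integrally_closed_general R W π hnormal 𝒟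
    hCartier
end

section
/- Let R be a domain with fraction field K, {I_n} a graded filtration of nonzero ideals of R, and v a discrete valuation of K nonnegative on R. Suppose that for every m ≥ 1, v(I_m)/m > γ_v(𝓘) = inf_n v(I_n)/n (the infimum is not attained). Then for every m ≥ 1 and every nonzero F ∈ I_m, the ring R[𝓘]_{(F t^m)} is not contained in the valuation ring O_v; i.e., there exist n ≥ 1 and H ∈ I_{mn} with v(H/F^n) < 0. -/
/-- Let `R` be a domain with fraction field `K`, `{I n}` a graded filtration
of nonzero ideals, `v` a discrete valuation nonnegative on `R`. Suppose the infimum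
`γ_v(𝓘) = inf_n v(I n)/n` is not attained: for every `m ≥ 1` there is `n ≥ 1` with
`v(I n)/n < v(I m)/m`. Then for every `m ≥ 1` and every nonzero `F ∈ I m`, the ring
`R[𝓘]_{(F t^m)}` is not contained in `O_v`: there exist `n ≥ 1` and `H ∈ I (m·n)` with
`v (H / F^n) < 0`. -/
theorem degree_zero_localization_not_subset_valuation_ring
    (R : Type*) [CommRing R] [IsDomain R]
    (v : FractionRing R → ℤ)
    (hv_mul : ∀ x y : FractionRing R, x ≠ 0 → y ≠ 0 → v (x * y) = v x + v y)
    (hv_add : ∀ x y : FractionRing R, x ≠ 0 → y ≠ 0 → x + y ≠ 0 →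
      min (v x) (v y) ≤ v (x + y))
    (hv_nonneg : ∀ r : R, algebraMap R (FractionRing R) r ≠ 0 →
      0 ≤ v (algebraMap R (FractionRing R) r))
    (I : ℕ → Ideal R)
    (hI0 : I 0 = ⊤)
    (hIanti : ∀ n : ℕ, I (n + 1) ≤ I n)
    (hImul : ∀ m n : ℕ, I m * I n ≤ I (m + n))
    (hInz : ∀ n : ℕ, I n ≠ ⊥)
    (vI : ℕ → ℤ)
    (hvI : ∀ n : ℕ, IsLeast {c : ℤ | ∃ f : R, f ∈ I n ∧ f ≠ 0 ∧
      v (algebraMap R (FractionRing R) f) = c} (vI n))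
    (hnotattain : ∀ m : ℕ, 0 < m → ∃ n : ℕ, 0 < n ∧ (vI n : ℝ) / n < (vI m : ℝ) / m) :
    ∀ m : ℕ, 0 < m → ∀ F : R, F ∈ I m → F ≠ 0 →
      ∃ (n : ℕ) (H : R), 0 < n ∧ H ∈ I (m * n) ∧ H ≠ 0 ∧
        v (algebraMap R (FractionRing R) H /
            (algebraMap R (FractionRing R) F) ^ n) < 0 := by
  intro m hm F hF hFne
  obtain ⟨n, hn, hlt⟩ := hnotattain m hm
  obtain ⟨⟨g, hgI, hgne, hgv⟩, hlb⟩ := hvI n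
  -- algebraMap facts
  have hinj : Function.Injective (algebraMap R (FractionRing R)) :=
    IsFractionRing.injective R (FractionRing R)
  have hmapne : ∀ r : R, r ≠ 0 → algebraMap R (FractionRing R) r ≠ 0 := by
    intro r hr h
    exact hr (hinj (by simpa using h))
  have hv1 : v 1 = 0 := by
    have := hv_mul 1 1 one_ne_zero one_ne_zero
    simp at this; linarith
  have hvpow : ∀ (x : FractionRing R), x ≠ 0 → ∀ k : ℕ, v (x ^ k) = k * v x := by
    intro x hx k
    induction k with
    | zero => simpa using hv1
    | succ k ih =>
        have hxk : x ^ k ≠ 0 := pow_ne_zero _ hx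
        rw [pow_succ, hv_mul _ _ hxk hx, ih]
        push_cast; ring
  -- g^m ∈ I (m * n)
  have hpowmem : ∀ k : ℕ, g ^ k ∈ I (k * n) := by
    intro k
    induction k with
    | zero => simp [hI0]
    | succ k ih =>
        have : g ^ k * g ∈ I (k * n) * I n := Ideal.mul_mem_mul ih hgI
        have h2 := hImul (k * n) n this
        rw [pow_succ]
        convert h2 using 2
        ring
  refine ⟨n, g ^ m, hn, hpowmem m, pow_ne_zero _ hgne, ?_⟩
  -- value computations
  have hFm : algebraMap R (FractionRing R) F ≠ 0 := hmapne F hFne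
  have hGm : algebraMap R (FractionRing R) g ≠ 0 := hmapne g hgne
  have hFn : (algebraMap R (FractionRing R) F) ^ n ≠ 0 := pow_ne_zero _ hFm
  have hHm : algebraMap R (FractionRing R) (g ^ m) ≠ 0 := hmapne _ (pow_ne_zero _ hgne)
  have hq : algebraMap R (FractionRing R) (g ^ m) /
      (algebraMap R (FractionRing R) F) ^ n ≠ 0 := div_ne_zero hHm hFn
  have hvq : v (algebraMap R (FractionRing R) (g ^ m) /
      (algebraMap R (FractionRing R) F) ^ n)
      = v (algebraMap R (FractionRing R) (g ^ m)) -
        v ((algebraMap R (FractionRing R) F) ^ n) := by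
    have := hv_mul _ _ hq hFn
    rw [div_mul_cancel₀ _ hFn] at this
    linarith
  have hvH : v (algebraMap R (FractionRing R) (g ^ m)) = m * vI n := by
    rw [map_pow, hvpow _ hGm, hgv]
  have hvFn : v ((algebraMap R (FractionRing R) F) ^ n) =
      n * v (algebraMap R (FractionRing R) F) := hvpow _ hFm n
  -- the key inequality
  have hFlb : vI m ≤ v (algebraMap R (FractionRing R) F) :=
    (hvI m).2 ⟨F, hF, hFne, rfl⟩
  have hmR : (0:ℝ) < (m:ℝ) := by exact_mod_cast hm
  have hnR : (0:ℝ) < (n:ℝ) := by exact_mod_cast hn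
  have hkey : (m : ℤ) * vI n < n * vI m := by
    have := (div_lt_div_iff₀ hnR hmR).mp hlt
    have : (m:ℝ) * vI n < n * vI m := by linarith
    exact_mod_cast this
  have : (m : ℤ) * vI n < n * v (algebraMap R (FractionRing R) F) := by
    have h2 : (n:ℤ) * vI m ≤ n * v (algebraMap R (FractionRing R) F) := by
      apply mul_le_mul_of_nonneg_left hFlb (by positivity)
    linarith
  rw [hvq, hvH, hvFn]
  linarith
end
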